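/- Let a, b, c ∈ ℂ with c not a nonpositive integer. Then there is an open neighborhood U of 0 in ℂ such that the function g(x) = ₂F₁(a, b; c; x(2-x)) satisfies Heun's differential equation with parameters (t, q; a', b'; c'; d') = (2, 4ab; 2a, 2b; c; 2a+2b-2c+1) at every x ∈ U with x ∉ {0, 1, 2}. -/

import Mathlib

/-!
On the unit disc `F = ₂F₁(a, b; c; ·)` is the sum `∑ kₙ zⁿ` of its power series. Differentiating
termwise, Gauss's operator `z(1-z)F'' + (c-(a+b+1)z)F' - abF` is the difference of the series with
coefficients `(n+1)(n+c)kₙ₊₁` and `(n+a)(n+b)kₙ`, which agree by the recurrence of the `kₙ` (this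
is where `c ∉ -ℕ` enters). For `g(x) = F(x(2-x))` one has `1 - x(2-x) = (1-x)²`,
`g' = 2(1-x)F'` and `g'' = 4(1-x)²F'' - 2F'`, so Heun's equation with the given parameters,
cleared of denominators, is a multiple of Gauss's equation at `z = x(2-x)`. It therefore holds
wherever `‖x(2-x)‖ < 1`.
-/

open Complex

/-- `g` satisfies Heun's differential equation with parameters `(t, q; a, b; c; d)`
at the point `x`: `g` is twice complex differentiable at `x` and
`g''(x) + (c/x + d/(x-1) + (a+b-c-d+1)/(x-t)) g'(x) + ((a b x - q)/(x(x-1)(x-t))) g(x) = 0`. -/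
def SatisfiesHeunAt (t q a b c d : ℂ) (g : ℂ → ℂ) (x : ℂ) : Prop :=
  DifferentiableAt ℂ g x ∧ DifferentiableAt ℂ (deriv g) x ∧
    deriv (deriv g) x +
      (c / x + d / (x - 1) + (a + b - c - d + 1) / (x - t)) * deriv g x +
      ((a * b * x - q) / (x * (x - 1) * (x - t))) * g x = 0

open FormalMultilinearSeries Filter Topology

section

variable {𝕜 : Type*} [NontriviallyNormedField 𝕜]

def derivCoeff (c : ℕ → 𝕜) (n : ℕ) : 𝕜 := (n + 1) * c (n + 1)

def HypergeometricEqAt (a b c : 𝕜) (F : 𝕜 → 𝕜) (z : 𝕜) : Prop :=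
  z * (1 - z) * deriv (deriv F) z + (c - (a + b + 1) * z) * deriv F z - a * b * F z = 0

variable [CompleteSpace 𝕜]

theorem HasFPowerSeriesOnBall.deriv_ofScalars {f : 𝕜 → 𝕜} {c : ℕ → 𝕜} {x : 𝕜} {r : ENNReal}
    (h : HasFPowerSeriesOnBall f (ofScalars 𝕜 c) x r) :
    HasFPowerSeriesOnBall (deriv f) (ofScalars 𝕜 (derivCoeff c)) x r := by
  have hseries : (ContinuousLinearMap.apply 𝕜 𝕜 (1 : 𝕜)).compFormalMultilinearSeries
      (ofScalars 𝕜 c).derivSeries = ofScalars 𝕜 (derivCoeff c) := by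
    ext n : 1
    rw [← mkPiRing_coeff_eq (ofScalars 𝕜 _),
      ← mkPiRing_coeff_eq (ContinuousLinearMap.compFormalMultilinearSeries _ _)]
    congr 1
    rw [coeff_ofScalars, derivCoeff]
    exact (derivSeries_coeff_one _ n).trans (by simp [nsmul_eq_mul])
  exact hseries ▸ (ContinuousLinearMap.apply 𝕜 𝕜 (1 : 𝕜)).comp_hasFPowerSeriesOnBall h.fderiv

theorem hasDerivAt_deriv_comp_of_analyticAt {F φ φ' : 𝕜 → 𝕜} {x φ'' : 𝕜}
    (hF : AnalyticAt 𝕜 F (φ x)) (hφ : ∀ᶠ y in 𝓝 x, HasDerivAt φ (φ' y) y)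
    (hφ' : HasDerivAt φ' φ'' x) :
    HasDerivAt (deriv fun y => F (φ y))
      (deriv (deriv F) (φ x) * φ' x ^ 2 + deriv F (φ x) * φ'') x := by
  have hFφ : ∀ᶠ y in 𝓝 x, AnalyticAt 𝕜 F (φ y) :=
    hφ.self_of_nhds.continuousAt.eventually hF.eventually_analyticAt
  have hderiv : (deriv fun y => F (φ y)) =ᶠ[𝓝 x] fun y => deriv F (φ y) * φ' y := by
    filter_upwards [hFφ, hφ] with y hFy hφy
    exact (hFy.differentiableAt.hasDerivAt.comp y hφy).deriv
  refine ((hF.deriv.differentiableAt.hasDerivAt.comp x hφ.self_of_nhds).mul hφ')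
    |>.congr_of_eventuallyEq hderiv |>.congr_deriv ?_
  rw [Function.comp_apply]
  ring

end

theorem HasSum.of_nat_add {M : Type*} [AddCommGroup M] [TopologicalSpace M]
    [IsTopologicalAddGroup M] {f : ℕ → M} {s : M} (k : ℕ) (h : HasSum (fun n => f (n + k)) s)
    (hf : ∀ i < k, f i = 0) : HasSum f s := by
  simpa [Finset.sum_eq_zero (fun i hi => hf i (Finset.mem_range.mp hi))] using
    (hasSum_nat_add_iff k).mp h

section Hypergeometric

variable {𝕂 : Type*} [RCLike 𝕂]

theorem one_le_radius_ordinaryHypergeometricSeries (𝔸 : Type*) [NormedDivisionRing 𝔸]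
    [NormedAlgebra 𝕂 𝔸] (a b c : 𝕂) : 1 ≤ (ordinaryHypergeometricSeries 𝔸 a b c).radius := by
  by_cases h : ∀ k : ℕ, (k : 𝕂) ≠ -a ∧ (k : 𝕂) ≠ -b ∧ (k : 𝕂) ≠ -c
  · exact (ordinaryHypergeometricSeries_radius_eq_one 𝔸 a b c h).ge
  simp only [not_forall, not_and_or, not_not] at h
  obtain ⟨k, hk | hk | hk⟩ := h
  · rw [show a = -(k : 𝕂) by rw [hk, neg_neg], ordinaryHypergeometric_radius_top_of_neg_nat₁]
    exact le_top
  · rw [show b = -(k : 𝕂) by rw [hk, neg_neg], ordinaryHypergeometric_radius_top_of_neg_nat₂]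
    exact le_top
  · rw [show c = -(k : 𝕂) by rw [hk, neg_neg], ordinaryHypergeometric_radius_top_of_neg_nat₃]
    exact le_top

theorem hasFPowerSeriesOnBall_ordinaryHypergeometric (a b c : 𝕂) :
    HasFPowerSeriesOnBall (₂F₁ a b c : 𝕂 → 𝕂) (ordinaryHypergeometricSeries 𝕂 a b c) 0 1 :=
  have h := one_le_radius_ordinaryHypergeometricSeries 𝕂 a b c
  ((ordinaryHypergeometricSeries 𝕂 a b c).hasFPowerSeriesOnBall (zero_lt_one.trans_le h)).mono
    one_pos h

theorem ordinaryHypergeometricCoefficient_succ_mul (a b : 𝕂) {c : 𝕂} {n : ℕ} (hcn : c + n ≠ 0) :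
    (n + 1) * (n + c) * ordinaryHypergeometricCoefficient a b c (n + 1) =
      (n + a) * (n + b) * ordinaryHypergeometricCoefficient a b c n := by
  simp only [ordinaryHypergeometricCoefficient, ascPochhammer_succ_eval, Nat.factorial_succ,
    Nat.cast_mul, Nat.cast_add, Nat.cast_one, mul_inv]
  field_simp
  ring

theorem hypergeometricEqAt_ordinaryHypergeometric {a b c : 𝕂} (hc : ∀ n : ℕ, c ≠ -n) {z : 𝕂}
    (hz : z ∈ Metric.eball 0 1) :
    HypergeometricEqAt a b c (₂F₁ a b c) z := by
  set K := ordinaryHypergeometricCoefficient a b c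
  have hasSum_of {f : 𝕂 → 𝕂} {d : ℕ → 𝕂} (h : HasFPowerSeriesOnBall f (ofScalars 𝕂 d) 0 1) :
      HasSum (fun n => d n * z ^ n) (f z) := by
    simpa [ofScalars_apply_eq, mul_comm] using h.hasSum hz
  have hF := hasFPowerSeriesOnBall_ordinaryHypergeometric a b c
  have h0 := hasSum_of hF
  have h1 := hasSum_of hF.deriv_ofScalars
  have h2 := hasSum_of hF.deriv_ofScalars.deriv_ofScalars
  have hzF'' : HasSum (fun n : ℕ => (n : 𝕂) * (n + 1) * K (n + 1) * z ^ n)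
      (z * deriv (deriv (₂F₁ a b c)) z) :=
    .of_nat_add 1 ((h2.mul_left z).congr_fun fun n => by
      simp only [derivCoeff, K]; push_cast; ring) (by simp)
  have hz2F'' : HasSum (fun n : ℕ => (n : 𝕂) * (n - 1) * K n * z ^ n)
      (z ^ 2 * deriv (deriv (₂F₁ a b c)) z) :=
    .of_nat_add 2 ((h2.mul_left (z ^ 2)).congr_fun fun n => by
      simp only [derivCoeff, K]; push_cast; ring)
      (by intro i hi; interval_cases i <;> simp)
  have hzF' : HasSum (fun n : ℕ => (n : 𝕂) * K n * z ^ n) (z * deriv (₂F₁ a b c) z) :=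
    .of_nat_add 1 ((h1.mul_left z).congr_fun fun n => by
      simp only [derivCoeff, K]; push_cast; ring) (by simp)
  have hlhs : HasSum (fun n : ℕ => (n + 1) * (n + c) * K (n + 1) * z ^ n)
      (z * deriv (deriv (₂F₁ a b c)) z + c * deriv (₂F₁ a b c) z) := by
    refine (hzF''.add (h1.mul_left c)).congr_fun fun n => ?_
    simp only [derivCoeff, K]
    ring
  have hrhs : HasSum (fun n : ℕ => (n + a) * (n + b) * K n * z ^ n)
      (z ^ 2 * deriv (deriv (₂F₁ a b c)) z + (a + b + 1) * (z * deriv (₂F₁ a b c) z) +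
        a * b * ₂F₁ a b c z) := by
    refine ((hz2F''.add (hzF'.mul_left (a + b + 1))).add (h0.mul_left (a * b))).congr_fun
      fun n => ?_
    ring
  have hrec (n : ℕ) := ordinaryHypergeometricCoefficient_succ_mul a b (n := n)
    fun h => hc n (by linear_combination h)
  simp only [K, hrec] at hlhs
  unfold HypergeometricEqAt
  linear_combination hlhs.unique hrhs

end Hypergeometric

theorem HypergeometricEqAt.satisfiesHeunAt_comp_mul_two_sub {a b c x : ℂ} {F : ℂ → ℂ}
    (hode : HypergeometricEqAt a b c F (x * (2 - x))) (hF : AnalyticAt ℂ F (x * (2 - x)))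
    (hx0 : x ≠ 0) (hx1 : x ≠ 1) (hx2 : x ≠ 2) :
    SatisfiesHeunAt 2 (4 * a * b) (2 * a) (2 * b) c (2 * a + 2 * b - 2 * c + 1)
      (fun x => F (x * (2 - x))) x := by
  have hφ (y : ℂ) : HasDerivAt (fun y => y * (2 - y)) (2 - 2 * y) y :=
    ((hasDerivAt_id' y).fun_mul ((hasDerivAt_id' y).const_sub 2)).congr_deriv (by ring)
  have hφ' : HasDerivAt (fun y : ℂ => 2 - 2 * y) (-2) x := by
    simpa using ((hasDerivAt_id x).const_mul (2 : ℂ)).const_sub 2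
  have hg : HasDerivAt (fun y => F (y * (2 - y))) _ x :=
    hF.differentiableAt.hasDerivAt.comp x (hφ x)
  have hg' :=
    hasDerivAt_deriv_comp_of_analyticAt (φ := fun y => y * (2 - y)) hF (.of_forall hφ) hφ'
  refine ⟨hg.differentiableAt, hg'.differentiableAt, ?_⟩
  rw [hg.deriv, hg'.deriv]
  have hx1' : x - 1 ≠ 0 := sub_ne_zero.mpr hx1
  have hx2' : x - 2 ≠ 0 := sub_ne_zero.mpr hx2
  unfold HypergeometricEqAt at hode
  field_simp
  linear_combination (-4 * (x - 1)) * hode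

theorem stmt5 (a b c : ℂ) (hc : ∀ n : ℕ, c ≠ -(n : ℂ)) :
    ∃ U : Set ℂ, IsOpen U ∧ (0 : ℂ) ∈ U ∧ ∀ x ∈ U, x ≠ (0 : ℂ) → x ≠ (1 : ℂ) → x ≠ (2 : ℂ) →
      SatisfiesHeunAt (2) (4*a*b) (2*a) (2*b) (c) (2*a + 2*b - 2*c + 1)
        (fun x : ℂ => ordinaryHypergeometric a b c (x*(2-x))) x := by
  refine ⟨(fun x => x * (2 - x)) ⁻¹' Metric.eball 0 1,
    Metric.isOpen_eball.preimage (by fun_prop), by simp, fun x hx hx0 hx1 hx2 => ?_⟩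
  have hF : AnalyticAt ℂ (₂F₁ a b c) (x * (2 - x)) :=
    (hasFPowerSeriesOnBall_ordinaryHypergeometric a b c).analyticAt_of_mem (by simpa using hx)
  exact (hypergeometricEqAt_ordinaryHypergeometric hc hx).satisfiesHeunAt_comp_mul_two_sub hF
    hx0 hx1 hx2
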